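/- Let k ≥ 1 and let K be a rectangle [a,a+h]×[b,b+h]. For any v₁ ∈ P_{k-1}(K) ⊕ span{x^k, x y^{k-1}} there exist unique v_{x}¹ ∈ P_{k-2}(K) ⊕ span{x^{k-1}, y^{k-1}} and v_{y}¹ ∈ span{1, y, ..., y^{k-1}} such that v₁ = (x - (a+h)) v_{x}¹ + v_{y}¹. -/

import Mathlib

/-!
Divide by `x - c` in the variable `x`: since `x^i y^j = (x - c) (∑_{l<i} x^l c^(i-1-l)) y^j + c^i y^j`,
every polynomial of degree `≤ n` is `(x - c) q + r` with `deg q < n` (or `q = 0`) and `r` a polynomial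
in `y` alone of degree `≤ n`. The two enriching functions are first brought down to degree `k - 1` by
`x^k = (x - c) x^(k-1) + c x^(k-1)` and `x y^(k-1) = (x - c) y^(k-1) + c y^(k-1)`, which produce the
terms `x^(k-1)` and `y^(k-1)` of `v_x¹`. Uniqueness: substituting `x := c` into
`(x - c) g + r = (x - c) g' + r'` gives `r = r'`, and `x - c` is not a zero divisor.
-/

open MvPolynomial Finset

namespace MvPolynomial

variable {σ R : Type*} [CommRing R]

theorem X_sub_C_ne_zero [Nontrivial R] (i : σ) (c : R) : (X i - C c : MvPolynomial σ R) ≠ 0 := by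
  classical
  intro h
  simpa using congrArg (eval (Function.update 0 i (c + 1))) h

theorem eq_of_X_sub_C_mul_add_sum_eq [IsDomain R] {i j : σ} (hij : i ≠ j) (c : R)
    {g g' : MvPolynomial σ R} {s : Finset ℕ} {u u' : ℕ → R}
    (h : (X i - C c) * g + ∑ n ∈ s, C (u n) * X j ^ n =
      (X i - C c) * g' + ∑ n ∈ s, C (u' n) * X j ^ n) :
    g = g' := by
  classical
  have hr : ∑ n ∈ s, C (u n) * X j ^ n = ∑ n ∈ s, C (u' n) * X j ^ n := by
    simpa [hij.symm] using congrArg (aeval (Function.update X i (C c))) h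
  rw [hr, add_left_inj] at h
  exact mul_left_cancel₀ (X_sub_C_ne_zero i c) h

theorem eq_zero_or_totalDegree_lt_add {p q : MvPolynomial σ R} {n : ℕ}
    (hp : p = 0 ∨ p.totalDegree < n) (hq : q = 0 ∨ q.totalDegree < n) :
    p + q = 0 ∨ (p + q).totalDegree < n := by
  rcases hp with rfl | hp
  · simpa using hq
  rcases hq with rfl | hq
  · simpa using Or.inr hp
  exact Or.inr <| (totalDegree_add p q).trans_lt (max_lt hp hq)

theorem totalDegree_X_pow_le (i : σ) (l : ℕ) : (X i ^ l : MvPolynomial σ R).totalDegree ≤ l := by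
  rw [X_pow_eq_monomial]
  exact (totalDegree_monomial_le _ _).trans (by simp)

theorem totalDegree_geom_sum₂_le (i : σ) (c : R) (k : ℕ) :
    (∑ l ∈ range k, X i ^ l * C c ^ (k - 1 - l) : MvPolynomial σ R).totalDegree ≤ k - 1 := by
  refine totalDegree_finsetSum_le fun l hl => ?_
  grw [totalDegree_mul, totalDegree_X_pow_le, ← map_pow, totalDegree_C]
  simp only [mem_range] at hl
  omega

def HasXSubCDecomp (c : R) (n : ℕ) (p : MvPolynomial (Fin 2) R) : Prop :=
  ∃ q : MvPolynomial (Fin 2) R, ∃ u : ℕ → R, (q = 0 ∨ q.totalDegree < n) ∧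
    p = (X 0 - C c) * q + ∑ j ∈ range (n + 1), C (u j) * X 1 ^ j

namespace HasXSubCDecomp

variable {c : R} {n : ℕ}

theorem zero : HasXSubCDecomp c n 0 :=
  ⟨0, 0, Or.inl rfl, by simp⟩

theorem add {p p' : MvPolynomial (Fin 2) R} (hp : HasXSubCDecomp c n p)
    (hp' : HasXSubCDecomp c n p') : HasXSubCDecomp c n (p + p') := by
  obtain ⟨q, u, hq, rfl⟩ := hp
  obtain ⟨q', u', hq', rfl⟩ := hp'
  refine ⟨q + q', u + u', eq_zero_or_totalDegree_lt_add hq hq', ?_⟩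
  simp only [Pi.add_apply, map_add, add_mul, sum_add_distrib]
  ring

theorem monomial_of_le (m : Fin 2 →₀ ℕ) (a : R) (hm : m 0 + m 1 ≤ n) :
    HasXSubCDecomp c n (monomial m a) := by
  refine ⟨C a * (∑ l ∈ range (m 0), X 0 ^ l * C c ^ (m 0 - 1 - l)) * X 1 ^ m 1,
    fun j => if j = m 1 then a * c ^ m 0 else 0, ?_, ?_⟩
  · rcases Nat.eq_zero_or_pos (m 0) with h0 | h0
    · simp [h0]
    · right
      grw [totalDegree_mul, totalDegree_mul, totalDegree_C, totalDegree_geom_sum₂_le,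
        totalDegree_X_pow_le]
      omega
  · have hm1 : m 1 ≤ n := by omega
    rw [monomial_eq, Finsupp.prod_pow, Fin.prod_univ_two]
    simp only [apply_ite C, C_mul, C_pow, C_0, ite_mul, zero_mul, sum_ite_eq', mem_range,
      Order.lt_add_one_iff, hm1, if_true]
    linear_combination -C a * X 1 ^ m 1 * geom_sum₂_mul (X 0 : MvPolynomial (Fin 2) R) (C c) (m 0)

theorem of_totalDegree_le (c : R) {p : MvPolynomial (Fin 2) R} (hp : p.totalDegree ≤ n) :
    HasXSubCDecomp c n p := by
  rw [p.as_sum]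
  refine sum_induction _ _ (fun _ _ => add) zero fun m hm => monomial_of_le m _ ?_
  have hm := le_totalDegree hm
  rw [Finsupp.sum_fintype _ _ fun _ => rfl, Fin.sum_univ_two] at hm
  omega

end HasXSubCDecomp

end MvPolynomial

theorem displacement_decomposition_general (k : ℕ) (hk : 1 ≤ k) (a h : ℝ)
    (v1 : MvPolynomial (Fin 2) ℝ)
    (hv1 : ∃ p : MvPolynomial (Fin 2) ℝ, ∃ c d : ℝ, p.totalDegree ≤ k - 1 ∧
      v1 = p + MvPolynomial.C c * X 0 ^ k + MvPolynomial.C d * X 0 * X 1 ^ (k - 1)) :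
    ∃! w : MvPolynomial (Fin 2) ℝ × MvPolynomial (Fin 2) ℝ,
      (∃ p : MvPolynomial (Fin 2) ℝ, ∃ c d : ℝ, (p = 0 ∨ p.totalDegree + 2 ≤ k) ∧
        w.1 = p + MvPolynomial.C c * X 0 ^ (k - 1) + MvPolynomial.C d * X 1 ^ (k - 1)) ∧
      (∃ u : ℕ → ℝ, w.2 = ∑ j ∈ Finset.range k, MvPolynomial.C (u j) * X 1 ^ j) ∧
      v1 = (X 0 - MvPolynomial.C (a + h)) * w.1 + w.2 := by
  obtain ⟨n, rfl⟩ : ∃ n, k = n + 1 := ⟨k - 1, by omega⟩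
  obtain ⟨p, c, d, hp, rfl⟩ := hv1
  simp only [Nat.add_sub_cancel] at hp ⊢
  set c₀ := a + h
  have hdeg : (p + C (c * c₀) * X 0 ^ n + C (d * c₀) * X 1 ^ n).totalDegree ≤ n := by
    grw [totalDegree_add, totalDegree_add, totalDegree_mul, totalDegree_mul, totalDegree_C,
      totalDegree_C, totalDegree_X_pow_le, totalDegree_X_pow_le]
    simp [hp]
  obtain ⟨q, u, hq, hpq⟩ := HasXSubCDecomp.of_totalDegree_le c₀ hdeg
  have hv : p + C c * X 0 ^ (n + 1) + C d * X 0 * X 1 ^ n =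
      (X 0 - C c₀) * (q + C c * X 0 ^ n + C d * X 1 ^ n) +
        ∑ j ∈ range (n + 1), C (u j) * X 1 ^ j := by
    simp only [map_mul] at hpq
    linear_combination hpq
  refine ⟨(_, _), ⟨⟨q, c, d, hq.imp_right (by omega), rfl⟩, ⟨u, rfl⟩, hv⟩, ?_⟩
  rintro ⟨w₁, w₂⟩ ⟨-, ⟨u', rfl⟩, hw⟩
  have hw' := hw.symm.trans hv
  obtain rfl := eq_of_X_sub_C_mul_add_sum_eq (by decide : (0 : Fin 2) ≠ 1) c₀ hw'
  exact Prod.ext rfl (add_left_cancel hw')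

/-- Unique decomposition `v₁ = (x - (a+h)) v_x¹ + v_y¹` of an element
`v₁ ∈ P_{k-1}(K) ⊕ span{x^k, x y^{k-1}}` on the rectangle `K = [a,a+h] × [b,b+h]`, with
`v_x¹ ∈ P_{k-2}(K) ⊕ span{x^{k-1}, y^{k-1}}` and `v_y¹ ∈ span{1, y, …, y^{k-1}}`
(variable `0` is `x`, variable `1` is `y`). -/
theorem displacement_decomposition (k : ℕ) (hk : 1 ≤ k) (a b h : ℝ) (hh : 0 < h)
    (v1 : MvPolynomial (Fin 2) ℝ)
    (hv1 : ∃ p : MvPolynomial (Fin 2) ℝ, ∃ c d : ℝ, p.totalDegree ≤ k - 1 ∧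
      v1 = p + MvPolynomial.C c * X 0 ^ k + MvPolynomial.C d * X 0 * X 1 ^ (k - 1)) :
    ∃! w : MvPolynomial (Fin 2) ℝ × MvPolynomial (Fin 2) ℝ,
      (∃ p : MvPolynomial (Fin 2) ℝ, ∃ c d : ℝ, (p = 0 ∨ p.totalDegree + 2 ≤ k) ∧
        w.1 = p + MvPolynomial.C c * X 0 ^ (k - 1) + MvPolynomial.C d * X 1 ^ (k - 1)) ∧
      (∃ u : ℕ → ℝ, w.2 = ∑ j ∈ Finset.range k, MvPolynomial.C (u j) * X 1 ^ j) ∧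
      v1 = (X 0 - MvPolynomial.C (a + h)) * w.1 + w.2 :=
  displacement_decomposition_general k hk a h v1 hv1
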